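/- Let C₀ = (≤1 r.⊤) (i.e., ¬(≥2 r.⊤)) and Σ = {r, s, s'}. Then for every ALC(Σ) concept C, ⊨ C₀ ⊑ (∃r.C → ∀r.C); and any (Σ,n)-uniform ALC interpolant of C₀ (with empty ontology) has size at least Tower(n−2) for n ≥ 2. -/

import Mathlib

namespace DL

/-- ALCQ concepts over concept names `Cn` and role names `Rn`. -/
inductive Concept (Cn Rn : Type) : Type
  | top : Concept Cn Rn
  | atom : Cn → Concept Cn Rn
  | neg : Concept Cn Rn → Concept Cn Rn
  | conj : Concept Cn Rn → Concept Cn Rn → Concept Cn Rn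
  | atLeast : ℕ → Rn → Concept Cn Rn → Concept Cn Rn
  deriving DecidableEq

namespace Concept
variable {Cn Rn : Type}

/-- ∃r.C -/
def ex (r : Rn) (c : Concept Cn Rn) : Concept Cn Rn := atLeast 1 r c
/-- ∀r.C -/
def all (r : Rn) (c : Concept Cn Rn) : Concept Cn Rn := neg (atLeast 1 r (neg c))
def disj (c d : Concept Cn Rn) : Concept Cn Rn := neg (conj (neg c) (neg d))
def impl (c d : Concept Cn Rn) : Concept Cn Rn := disj (neg c) d
def bot : Concept Cn Rn := neg top

/-- an ALC concept: all number restrictions are existential restrictions. -/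
def isALC : Concept Cn Rn → Prop
  | top => True
  | atom _ => True
  | neg c => c.isALC
  | conj c d => c.isALC ∧ d.isALC
  | atLeast n _ c => n = 1 ∧ c.isALC

/-- size (number of symbols) of a concept. -/
def size : Concept Cn Rn → ℕ
  | top => 1
  | atom _ => 1
  | neg c => c.size + 1
  | conj c d => c.size + d.size + 1
  | atLeast n _ c => c.size + n + 2

/-- role depth of a concept. -/
def roleDepth : Concept Cn Rn → ℕ
  | top => 0
  | atom _ => 0
  | neg c => c.roleDepth
  | conj c d => max c.roleDepth d.roleDepth
  | atLeast _ _ c => c.roleDepth + 1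

end Concept

/-- big conjunction of a list of concepts -/
def bigConj {Cn Rn : Type} : List (Concept Cn Rn) → Concept Cn Rn
  | [] => Concept.top
  | c :: l => Concept.conj c (bigConj l)

/-- big disjunction of a list of concepts -/
def bigDisj {Cn Rn : Type} (l : List (Concept Cn Rn)) : Concept Cn Rn :=
  Concept.neg (bigConj (l.map Concept.neg))

/-- a signature: a set of concept names and a set of role names. -/
structure Sig (Cn Rn : Type) where
  cs : Set Cn
  rs : Set Rn

/-- the concept uses only symbols from the signature σ. -/
def Concept.inSig {Cn Rn : Type} (σ : Sig Cn Rn) : Concept Cn Rn → Prop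
  | .top => True
  | .atom A => A ∈ σ.cs
  | .neg c => c.inSig σ
  | .conj c d => c.inSig σ ∧ d.inSig σ
  | .atLeast _ r c => r ∈ σ.rs ∧ c.inSig σ

/-- an interpretation I = (Δ^I, ·^I). -/
structure Interp (Cn Rn : Type) : Type 1 where
  Dom : Type
  atomI : Cn → Set Dom
  roleI : Rn → Set (Dom × Dom)

/-- extension C^I of a concept in an interpretation. -/
def Concept.sem {Cn Rn : Type} (I : Interp Cn Rn) : Concept Cn Rn → Set I.Dom
  | .top => Set.univ
  | .atom A => I.atomI A
  | .neg c => (c.sem I)ᶜ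
  | .conj c d => c.sem I ∩ d.sem I
  | .atLeast n r c =>
      {x | ∃ s : Finset I.Dom, n ≤ s.card ∧ ∀ e ∈ s, (x, e) ∈ I.roleI r ∧ e ∈ c.sem I}

/-- an ontology: concept inclusions and role inclusions. -/
structure Ontology (Cn Rn : Type) where
  cis : Set (Concept Cn Rn × Concept Cn Rn)
  ris : Set (Rn × Rn)

def Interp.isModel {Cn Rn : Type} (I : Interp Cn Rn) (O : Ontology Cn Rn) : Prop :=
  (∀ p ∈ O.cis, Concept.sem I p.1 ⊆ Concept.sem I p.2) ∧
  (∀ p ∈ O.ris, I.roleI p.1 ⊆ I.roleI p.2)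

/-- O ⊨ c ⊑ d -/
def entails {Cn Rn : Type} (O : Ontology Cn Rn) (c d : Concept Cn Rn) : Prop :=
  ∀ I : Interp Cn Rn, I.isModel O → c.sem I ⊆ d.sem I

/-- O ⊨ r ⊑ s for role names -/
def roleEnt {Cn Rn : Type} (O : Ontology Cn Rn) (r s : Rn) : Prop :=
  ∀ I : Interp Cn Rn, I.isModel O → I.roleI r ⊆ I.roleI s

/-- Z is a Σ-bisimulation between I and J. -/
def IsBisim {Cn Rn : Type} (σ : Sig Cn Rn) (I J : Interp Cn Rn)
    (Z : Set (I.Dom × J.Dom)) : Prop :=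
  ∀ d e, (d, e) ∈ Z →
    (∀ A ∈ σ.cs, d ∈ I.atomI A ↔ e ∈ J.atomI A) ∧
    (∀ r ∈ σ.rs, ∀ d', (d, d') ∈ I.roleI r → ∃ e', (e, e') ∈ J.roleI r ∧ (d', e') ∈ Z) ∧
    (∀ r ∈ σ.rs, ∀ e', (e, e') ∈ J.roleI r → ∃ d', (d, d') ∈ I.roleI r ∧ (d', e') ∈ Z)

/-- pointed interpretations are Σ-bisimilar. -/
def Bisimilar {Cn Rn : Type} (σ : Sig Cn Rn) (I : Interp Cn Rn) (d : I.Dom)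
    (J : Interp Cn Rn) (e : J.Dom) : Prop :=
  ∃ Z, IsBisim σ I J Z ∧ (d, e) ∈ Z

/-- E is an ALC(Σ) interpolant for O ⊨ c ⊑ d. -/
def IsInterpolant {Cn Rn : Type} (O : Ontology Cn Rn) (σ : Sig Cn Rn)
    (c d E : Concept Cn Rn) : Prop :=
  E.isALC ∧ E.inSig σ ∧ entails O c E ∧ entails O E d

/-- c and d are jointly ∼_{ALC,Σ}-consistent under O. -/
def JointlyConsistent {Cn Rn : Type} (O : Ontology Cn Rn) (σ : Sig Cn Rn)
    (c d : Concept Cn Rn) : Prop :=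
  ∃ (I₁ I₂ : Interp Cn Rn) (d₁ : I₁.Dom) (d₂ : I₂.Dom),
    I₁.isModel O ∧ I₂.isModel O ∧ d₁ ∈ c.sem I₁ ∧ d₂ ∈ d.sem I₂ ∧ Bisimilar σ I₁ d₁ I₂ d₂

/-- semantics of a set of concepts viewed as conjunction. -/
def setSem {Cn Rn : Type} (I : Interp Cn Rn) (t : Set (Concept Cn Rn)) : Set I.Dom :=
  {x | ∀ c ∈ t, x ∈ c.sem I}

/-- the type of an element: concepts from sub true at x. -/
def tpSet {Cn Rn : Type} (I : Interp Cn Rn) (sub : Set (Concept Cn Rn)) (x : I.Dom) :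
    Set (Concept Cn Rn) :=
  {c | c ∈ sub ∧ x ∈ c.sem I}

/-- t is a type for O (realizable subset of sub). -/
def IsTypeFor {Cn Rn : Type} (O : Ontology Cn Rn) (sub : Set (Concept Cn Rn))
    (t : Set (Concept Cn Rn)) : Prop :=
  ∃ (I : Interp Cn Rn) (x : I.Dom), I.isModel O ∧ t = tpSet I sub x

/-- t_{/r} = {C : ∀r.C ∈ t} -/
def slash {Cn Rn : Type} (t : Set (Concept Cn Rn)) (r : Rn) : Set (Concept Cn Rn) :=
  {c | Concept.all r c ∈ t}

/-- t ⤳_r t' -/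
def typeStep {Cn Rn : Type} (r : Rn) (t t' : Set (Concept Cn Rn)) : Prop :=
  slash t r ⊆ t'

/-- T ⤳_s T' for mosaics -/
def mosaicStep {Cn Rn : Type} (s : Rn) (T T' : Set (Set (Concept Cn Rn))) : Prop :=
  ∀ t ∈ T, ∃ t' ∈ T', typeStep s t t'

/-- O ⊨ t ⊑ D for a type t viewed as conjunction. -/
def entailsSet {Cn Rn : Type} (O : Ontology Cn Rn) (t : Set (Concept Cn Rn))
    (D : Concept Cn Rn) : Prop :=
  ∀ I : Interp Cn Rn, I.isModel O → setSem I t ⊆ D.sem I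

/-- iterated exponential -/
def Tower : ℕ → ℕ
  | 0 => 1
  | n + 1 => 2 ^ Tower n

/-- U is a (Σ,n)-uniform interpolant of c₀ under O. -/
def UniformInterpolant {Cn Rn : Type} (O : Ontology Cn Rn) (σ : Sig Cn Rn)
    (c₀ : Concept Cn Rn) (n : ℕ) (U : Concept Cn Rn) : Prop :=
  U.isALC ∧ U.inSig σ ∧ entails O c₀ U ∧
  ∀ E : Concept Cn Rn, E.isALC → E.inSig σ → E.roleDepth ≤ n →
    entails O c₀ E → entails O U E

/-- the empty ontology. -/
def Oempty : Ontology ℕ (Fin 3) := ⟨∅, ∅⟩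

/-- the signature Σ = {r, s, s'} with r = 0, s = 1, s' = 2. -/
def σ13 : Sig ℕ (Fin 3) := ⟨∅, {0, 1, 2}⟩

/-- C₀ = (≤ 1 r.⊤), i.e. ¬(≥ 2 r.⊤). -/
def C13 : Concept ℕ (Fin 3) := Concept.neg (Concept.atLeast 2 0 Concept.top)

/-
Since C₀ allows at most one r-successor, ∃r.C → ∀r.C follows from C₀ for every C.

For the lower bound let m = n - 1. In `typeModel m` every t : IterFinset j (the j-fold iterated
finite powerset, with Tower j elements) is a node whose s-successors are the nodes of its
elements, so t is singled out by a characteristic ALC concept χ_t of role depth j; every finite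
set S of level-m nodes is a root whose r-successors are the elements of S. A singleton root
satisfies C₀, hence any uniform interpolant U. For t ≠ t' the root {t, t'} refutes
∃r.χ_t → ∀r.χ_t, a consequence of C₀ of role depth n, hence refutes U.

U is a Boolean combination of its maximal subconcepts that are atoms or of the form ∃ρ.D, and
at a root S each of these holds iff some element of S has a fixed property. If t and t' were
not separated by any of them, the roots {t, t'} and {t} would agree on all of them and thus on
U. So these at most |U| concepts separate the Tower m = 2 ^ Tower (n - 2) level-m nodes.
-/

namespace Concept

variable {Cn Rn : Type} {I : Interp Cn Rn} {x : I.Dom}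

theorem mem_sem_neg {c : Concept Cn Rn} : x ∈ (neg c).sem I ↔ x ∉ c.sem I := Iff.rfl

theorem mem_sem_conj {c d : Concept Cn Rn} :
    x ∈ (conj c d).sem I ↔ x ∈ c.sem I ∧ x ∈ d.sem I := Iff.rfl

theorem mem_sem_ex {r : Rn} {c : Concept Cn Rn} :
    x ∈ (ex r c).sem I ↔ ∃ y, (x, y) ∈ I.roleI r ∧ y ∈ c.sem I := by
  constructor
  · rintro ⟨s, hs, h⟩
    obtain ⟨y, hy⟩ := Finset.card_pos.mp hs
    exact ⟨y, h y hy⟩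
  · rintro ⟨y, hxy, hy⟩
    exact ⟨{y}, by simp, by simp [hxy, hy]⟩

theorem mem_sem_all {r : Rn} {c : Concept Cn Rn} :
    x ∈ (all r c).sem I ↔ ∀ y, (x, y) ∈ I.roleI r → y ∈ c.sem I := by
  rw [all, mem_sem_neg, ← ex, mem_sem_ex]
  simp [mem_sem_neg]

theorem mem_sem_impl {c d : Concept Cn Rn} :
    x ∈ (impl c d).sem I ↔ (x ∈ c.sem I → x ∈ d.sem I) := by
  simp only [impl, disj, mem_sem_neg, mem_sem_conj]
  tauto

end Concept

open DL.Concept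

section BigConnectives

variable {Cn Rn : Type}

theorem mem_sem_bigConj {I : Interp Cn Rn} {x : I.Dom} {l : List (Concept Cn Rn)} :
    x ∈ (bigConj l).sem I ↔ ∀ c ∈ l, x ∈ c.sem I := by
  induction l with
  | nil => simp [bigConj, Concept.sem]
  | cons c l ih => simp [bigConj, mem_sem_conj, ih]

theorem mem_sem_bigDisj {I : Interp Cn Rn} {x : I.Dom} {l : List (Concept Cn Rn)} :
    x ∈ (bigDisj l).sem I ↔ ∃ c ∈ l, x ∈ c.sem I := by
  simp [bigDisj, mem_sem_neg, mem_sem_bigConj]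

theorem bigConj_induction (p : Concept Cn Rn → Prop) (top : p .top)
    (conj : ∀ c d, p c → p d → p (.conj c d)) {l : List (Concept Cn Rn)}
    (base : ∀ c ∈ l, p c) : p (bigConj l) := by
  induction l with
  | nil => exact top
  | cons c l ih =>
    exact conj _ _ (base c List.mem_cons_self) (ih fun d hd => base d (List.mem_cons_of_mem c hd))

theorem bigDisj_induction (p : Concept Cn Rn → Prop) (top : p .top)
    (neg : ∀ c, p c → p (.neg c)) (conj : ∀ c d, p c → p d → p (.conj c d))
    {l : List (Concept Cn Rn)} (base : ∀ c ∈ l, p c) : p (bigDisj l) :=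
  neg _ <| bigConj_induction p top conj <| by
    simpa using fun c hc => neg c (base c hc)

end BigConnectives

theorem entails_impl_ex_all {Cn Rn : Type} (O : Ontology Cn Rn) (r : Rn) (C : Concept Cn Rn) :
    entails O (neg (atLeast 2 r top)) (impl (ex r C) (all r C)) := by
  classical
  intro I _ x hx
  rw [mem_sem_impl, mem_sem_ex, mem_sem_all]
  rintro ⟨y, hy, hyC⟩ z hz
  by_contra hzC
  have hyz : y ≠ z := fun h => hzC (h ▸ hyC)
  refine hx ⟨{y, z}, (Finset.card_pair hyz).ge, fun e he => ?_⟩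
  rcases Finset.mem_insert.mp he with rfl | he
  · exact ⟨hy, Set.mem_univ _⟩
  · obtain rfl := Finset.mem_singleton.mp he
    exact ⟨hz, Set.mem_univ _⟩

namespace Concept

variable {Cn Rn : Type} [DecidableEq Cn] [DecidableEq Rn]

def boolAtoms : Concept Cn Rn → Finset (Concept Cn Rn)
  | top => ∅
  | atom A => {atom A}
  | neg c => c.boolAtoms
  | conj c d => c.boolAtoms ∪ d.boolAtoms
  | atLeast n r c => {atLeast n r c}

theorem card_boolAtoms_le_size (c : Concept Cn Rn) : c.boolAtoms.card ≤ c.size := by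
  induction c with
  | top | atom | atLeast => simp [boolAtoms, size]
  | neg c ih => simp only [boolAtoms, size]; omega
  | conj c d ihc ihd =>
    simp only [boolAtoms, size]
    have := Finset.card_union_le c.boolAtoms d.boolAtoms
    omega

theorem mem_sem_iff_of_boolAtoms {I : Interp Cn Rn} {x y : I.Dom} {c : Concept Cn Rn}
    (h : ∀ M ∈ c.boolAtoms, x ∈ M.sem I ↔ y ∈ M.sem I) : x ∈ c.sem I ↔ y ∈ c.sem I := by
  induction c with
  | top => simp [sem]
  | atom | atLeast => exact h _ (Finset.mem_singleton_self _)
  | neg c ih => exact not_congr (ih h)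
  | conj c d ihc ihd =>
    exact and_congr (ihc fun M hM => h M (Finset.mem_union_left _ hM))
      (ihd fun M hM => h M (Finset.mem_union_right _ hM))

theorem isALC.eq_atom_or_ex_of_mem_boolAtoms {c M : Concept Cn Rn} (hc : c.isALC)
    (hM : M ∈ c.boolAtoms) : (∃ A, M = atom A) ∨ ∃ r D, M = ex r D := by
  induction c with
  | top => simp [boolAtoms] at hM
  | atom A => exact .inl ⟨A, Finset.mem_singleton.mp hM⟩
  | neg c ih => exact ih hc hM
  | conj c d ihc ihd =>
    rcases Finset.mem_union.mp hM with hM | hM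
    · exact ihc hc.1 hM
    · exact ihd hc.2 hM
  | atLeast n r D =>
    obtain rfl := Finset.mem_singleton.mp hM
    exact .inr ⟨r, D, by rw [hc.1, ex]⟩

end Concept

def IterFinset : ℕ → Type
  | 0 => Unit
  | j + 1 => Finset (IterFinset j)

instance IterFinset.instDecidableEq : ∀ j, DecidableEq (IterFinset j)
  | 0 => inferInstanceAs (DecidableEq Unit)
  | j + 1 =>
    have := IterFinset.instDecidableEq j
    inferInstanceAs (DecidableEq (Finset (IterFinset j)))

instance IterFinset.instFintype : ∀ j, Fintype (IterFinset j)
  | 0 => inferInstanceAs (Fintype Unit)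
  | j + 1 =>
    have := IterFinset.instFintype j
    inferInstanceAs (Fintype (Finset (IterFinset j)))

theorem IterFinset.card : ∀ j, Fintype.card (IterFinset j) = Tower j
  | 0 => Fintype.card_unit
  | j + 1 => by
    rw [Tower, ← IterFinset.card j]
    exact Fintype.card_finset

noncomputable def charConcept {Cn Rn : Type} (s : Rn) : (j : ℕ) → IterFinset j → Concept Cn Rn
  | 0, _ => top
  | j + 1, t =>
    conj (bigConj ((Finset.toList (α := IterFinset j) t).map fun u => ex s (charConcept s j u)))
      (all s (bigDisj ((Finset.toList (α := IterFinset j) t).map (charConcept s j))))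

section CharConcept

variable {Cn Rn : Type} (s : Rn)

theorem isALC_charConcept : ∀ j (t : IterFinset j), (charConcept (Cn := Cn) s j t).isALC
  | 0, _ => trivial
  | j + 1, t => by
    refine ⟨bigConj_induction _ trivial (fun _ _ => And.intro) ?_, rfl,
      bigDisj_induction isALC trivial (fun _ => id) (fun _ _ => And.intro) ?_⟩
    all_goals
      simp only [List.mem_map]
      rintro _ ⟨u, -, rfl⟩
    exacts [⟨rfl, isALC_charConcept j u⟩, isALC_charConcept j u]

theorem inSig_charConcept {σ : Sig Cn Rn} (hs : s ∈ σ.rs) :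
    ∀ j (t : IterFinset j), (charConcept s j t).inSig σ
  | 0, _ => trivial
  | j + 1, t => by
    refine ⟨bigConj_induction _ trivial (fun _ _ => And.intro) ?_, hs,
      bigDisj_induction (inSig σ) trivial (fun _ => id) (fun _ _ => And.intro) ?_⟩
    all_goals
      simp only [List.mem_map]
      rintro _ ⟨u, -, rfl⟩
    exacts [⟨hs, inSig_charConcept hs j u⟩, inSig_charConcept hs j u]

theorem roleDepth_charConcept_le :
    ∀ j (t : IterFinset j), (charConcept (Cn := Cn) s j t).roleDepth ≤ j
  | 0, _ => le_rfl
  | j + 1, t => by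
    refine max_le (bigConj_induction (roleDepth · ≤ j + 1) (Nat.zero_le _)
      (fun _ _ => max_le) ?_) (Nat.succ_le_succ (bigDisj_induction (roleDepth · ≤ j)
        (Nat.zero_le _) (fun _ => id) (fun _ _ => max_le) ?_))
    all_goals
      simp only [List.mem_map]
      rintro _ ⟨u, -, rfl⟩
    exacts [Nat.succ_le_succ (roleDepth_charConcept_le j u), roleDepth_charConcept_le j u]

end CharConcept

def typeModel (m : ℕ) : Interp ℕ (Fin 3) where
  Dom := (Σ j, IterFinset j) ⊕ Finset (IterFinset m)
  atomI _ := ∅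
  roleI ρ :=
    if ρ = 0 then
      {p | ∃ (S : Finset (IterFinset m)) (t : IterFinset m), t ∈ S ∧ p = (.inr S, .inl ⟨m, t⟩)}
    else if ρ = 1 then
      {p | ∃ (j : ℕ) (t : Finset (IterFinset j)) (u : IterFinset j),
        u ∈ t ∧ p = (.inl ⟨j + 1, (t : IterFinset (j + 1))⟩, .inl ⟨j, u⟩)}
    else ∅

namespace typeModel

variable {m : ℕ}

abbrev node (j : ℕ) (t : IterFinset j) : (typeModel m).Dom := .inl ⟨j, t⟩

abbrev root (S : Finset (IterFinset m)) : (typeModel m).Dom := .inr S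

theorem isModel_Oempty : (typeModel m).isModel Oempty :=
  ⟨fun _ h => h.elim, fun _ h => h.elim⟩

theorem root_mem_roleI_zero {S : Finset (IterFinset m)} {y : (typeModel m).Dom} :
    (root S, y) ∈ (typeModel m).roleI 0 ↔ ∃ t ∈ S, y = node m t := by
  constructor
  · rintro ⟨S', t, ht, h⟩
    obtain ⟨h1, rfl⟩ := Prod.mk.inj h
    obtain rfl := Sum.inr.inj h1
    exact ⟨t, ht, rfl⟩
  · rintro ⟨t, ht, rfl⟩
    exact ⟨S, t, ht, rfl⟩

theorem root_notMem_roleI {S : Finset (IterFinset m)} {y : (typeModel m).Dom} {ρ : Fin 3}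
    (hρ : ρ ≠ 0) :
    (root S, y) ∉ (typeModel m).roleI ρ := by
  intro h
  simp only [typeModel, if_neg hρ] at h
  split_ifs at h
  · obtain ⟨j, t, u, -, h⟩ := h
    exact Sum.inr_ne_inl (Prod.mk.inj h).1
  · exact h

theorem node_mem_roleI_one {j : ℕ} {t : Finset (IterFinset j)} {y : (typeModel m).Dom} :
    (node (j + 1) t, y) ∈ (typeModel m).roleI 1 ↔ ∃ u ∈ t, y = node j u := by
  constructor
  · rintro ⟨j', t', u, hu, h⟩
    obtain ⟨h1, rfl⟩ := Prod.mk.inj h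
    obtain ⟨hj, ht⟩ := Sigma.mk.inj (Sum.inl.inj h1)
    obtain rfl := Nat.succ.inj hj
    obtain rfl := eq_of_heq ht
    exact ⟨u, hu, rfl⟩
  · rintro ⟨u, hu, rfl⟩
    exact ⟨j, t, u, hu, rfl⟩

theorem node_mem_sem_charConcept : ∀ j (t u : IterFinset j),
    node j u ∈ (charConcept 1 j t).sem (typeModel m) ↔ u = t
  | 0, t, u => iff_of_true trivial (Subsingleton.elim (α := Unit) u t)
  | j + 1, t, u => by
    change Finset (IterFinset j) at t u
    simp only [charConcept, mem_sem_conj, mem_sem_bigConj, List.mem_map, Finset.mem_toList,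
      forall_exists_index, and_imp, forall_apply_eq_imp_iff₂, mem_sem_ex, node_mem_roleI_one,
      existsAndEq, and_true, node_mem_sem_charConcept j, exists_eq_right, mem_sem_all,
      mem_sem_bigDisj, exists_exists_and_eq_and]
    refine ⟨fun ⟨hsup, hsub⟩ => Finset.Subset.antisymm (fun v hv => ?_) hsup, ?_⟩
    · obtain ⟨a, ha, hva⟩ := hsub _ v hv rfl
      rwa [(node_mem_sem_charConcept j a v).1 hva]
    · rintro rfl
      exact ⟨fun _ => id, fun _ v hv h => ⟨v, hv, h ▸ (node_mem_sem_charConcept j v v).2 rfl⟩⟩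

theorem root_singleton_mem_sem_C13 (t : IterFinset m) : root {t} ∈ C13.sem (typeModel m) := by
  rintro ⟨s, hs, h⟩
  have hsub : s ⊆ {node m t} := fun e he => by
    obtain ⟨t', ht', rfl⟩ := root_mem_roleI_zero.1 (h e he).1
    rw [Finset.mem_singleton.1 ht']
    exact Finset.mem_singleton_self _
  have := (Finset.card_le_card hsub).trans_eq (Finset.card_singleton _)
  omega

theorem exists_mem_sem_root_iff {M : Concept ℕ (Fin 3)}
    (hM : (∃ A, M = atom A) ∨ ∃ ρ D, M = ex ρ D) :
    ∃ P : IterFinset m → Prop, ∀ S, root S ∈ M.sem (typeModel m) ↔ ∃ u ∈ S, P u := by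
  rcases hM with ⟨A, rfl⟩ | ⟨ρ, D, rfl⟩
  · exact ⟨fun _ => False, fun S => iff_of_false (Set.notMem_empty _) (by simp)⟩
  · by_cases hρ : ρ = 0
    · subst hρ
      refine ⟨fun u => node m u ∈ D.sem (typeModel m), fun S => ?_⟩
      simp [mem_sem_ex, root_mem_roleI_zero]
    · exact ⟨fun _ => False, fun S => by simp [mem_sem_ex, root_notMem_roleI hρ]⟩

theorem mem_sem_root_pair_iff {U : Concept ℕ (Fin 3)} (hU : U.isALC) {t t' : IterFinset m}
    (h : ∀ M ∈ U.boolAtoms, root {t} ∈ M.sem (typeModel m) ↔ root {t'} ∈ M.sem (typeModel m)) :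
    root {t, t'} ∈ U.sem (typeModel m) ↔ root {t} ∈ U.sem (typeModel m) :=
  mem_sem_iff_of_boolAtoms fun M hM => by
    obtain ⟨P, hP⟩ := exists_mem_sem_root_iff (m := m) (hU.eq_atom_or_ex_of_mem_boolAtoms hM)
    have := h M hM
    simp only [hP, Finset.mem_insert, Finset.mem_singleton, exists_eq_or_imp, exists_eq_left]
      at this ⊢
    tauto

theorem root_pair_notMem_sem {U : Concept ℕ (Fin 3)}
    (hU : UniformInterpolant Oempty σ13 C13 (m + 1) U) {t t' : IterFinset m} (hne : t ≠ t') :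
    root {t, t'} ∉ U.sem (typeModel m) := by
  intro hUtt'
  let χ : Concept ℕ (Fin 3) := charConcept 1 m t
  have hχ : χ.isALC := isALC_charConcept 1 m t
  have hχσ : χ.inSig σ13 := inSig_charConcept 1 (by simp [σ13]) m t
  have hr : (0 : Fin 3) ∈ σ13.rs := by simp [σ13]
  have hχdepth : χ.roleDepth + 1 ≤ m + 1 := Nat.succ_le_succ (roleDepth_charConcept_le 1 m t)
  have hE : entails Oempty U (impl (ex 0 χ) (all 0 χ)) :=
    hU.2.2.2 _ ⟨⟨rfl, hχ⟩, rfl, hχ⟩ ⟨⟨hr, hχσ⟩, hr, hχσ⟩ (max_le hχdepth hχdepth)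
      (entails_impl_ex_all Oempty 0 χ)
  have hall := mem_sem_impl.1 (hE _ isModel_Oempty hUtt') <| mem_sem_ex.2
    ⟨node m t, root_mem_roleI_zero.2 ⟨t, by simp, rfl⟩, (node_mem_sem_charConcept m t t).2 rfl⟩
  exact hne ((node_mem_sem_charConcept m t t').1
    (mem_sem_all.1 hall _ (root_mem_roleI_zero.2 ⟨t', by simp, rfl⟩))).symm

end typeModel

open typeModel in
theorem tower_le_card_boolAtoms {k : ℕ} {U : Concept ℕ (Fin 3)}
    (hU : UniformInterpolant Oempty σ13 C13 (k + 2) U) : Tower k ≤ U.boolAtoms.card := by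
  classical
  let trueAtoms (t : IterFinset (k + 1)) : Finset (Concept ℕ (Fin 3)) :=
    U.boolAtoms.filter (root {t} ∈ ·.sem (typeModel (k + 1)))
  have hinj : Function.Injective trueAtoms := by
    intro t t' htt'
    by_contra hne
    refine root_pair_notMem_sem hU hne <| (mem_sem_root_pair_iff hU.1 fun M hM => ?_).2 <|
      hU.2.2.1 _ isModel_Oempty (root_singleton_mem_sem_C13 t)
    simpa [trueAtoms, hM] using congrArg (M ∈ ·) htt'
  have hcard := Finset.card_le_card_of_injOn (s := Finset.univ) trueAtoms
    (fun t _ => Finset.mem_powerset.2 (Finset.filter_subset _ U.boolAtoms)) hinj.injOn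
  rw [Finset.card_univ, IterFinset.card, Finset.card_powerset, Tower] at hcard
  exact (Nat.pow_le_pow_iff_right one_lt_two).1 hcard

/-- Theorem 4: ⊨ C₀ ⊑ (∃r.C → ∀r.C) for every ALC(Σ) concept C, and every
(Σ,n)-uniform ALC interpolant of C₀ has size at least Tower(n−2) for n ≥ 2. -/
theorem alcq_uniform_interpolant_lower_bound :
    (∀ C : Concept ℕ (Fin 3), C.isALC → C.inSig σ13 →
      entails Oempty C13 (Concept.impl (Concept.ex 0 C) (Concept.all 0 C))) ∧
    (∀ n : ℕ, 2 ≤ n → ∀ U : Concept ℕ (Fin 3),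
      UniformInterpolant Oempty σ13 C13 n U → Tower (n - 2) ≤ U.size) := by
  refine ⟨fun C _ _ => entails_impl_ex_all Oempty 0 C, fun n hn U hU => ?_⟩
  obtain ⟨k, rfl⟩ := Nat.exists_eq_add_of_le' hn
  calc Tower (k + 2 - 2) = Tower k := rfl
    _ ≤ U.boolAtoms.card := tower_le_card_boolAtoms hU
    _ ≤ U.size := card_boolAtoms_le_size U
end DL
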